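/- Let U ⊆ ℝ³ be open and let F = (F_ij)_{1≤i,j≤3} be a symmetric matrix field of smooth real-valued functions on U. Then for all i, j, inc(inc(F))_ij = ΔΔ F_ij + ∂_i∂_j∂_k∂_l F_kl − Δ(∂_j∂_k F_ik) − Δ(∂_i∂_k F_jk) on U, where Δ = ∂_m∂_m is the Laplacian and repeated indices are summed over {1,2,3}. -/

import Mathlib

open MeasureTheory Real

/-- Partial derivative in the `i`-th coordinate direction of a function on `ℝ³`. -/
noncomputable def pd3 (i : Fin 3) (f : EuclideanSpace ℝ (Fin 3) → ℝ) :
    EuclideanSpace ℝ (Fin 3) → ℝ :=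
  fun x => fderiv ℝ f x (EuclideanSpace.single i 1)

/-- The Levi-Civita symbol `ε_ijk` on `{0,1,2}`. -/
noncomputable def lc (i j k : Fin 3) : ℝ :=
  (((j : ℕ) : ℝ) - ((i : ℕ) : ℝ)) * (((k : ℕ) : ℝ) - ((j : ℕ) : ℝ))
    * (((k : ℕ) : ℝ) - ((i : ℕ) : ℝ)) / 2

/-- The incompatibility tensor `inc(F)_ij = ε_ikl ε_jmn ∂_k ∂_m F_ln`. -/
noncomputable def inc (F : Fin 3 → Fin 3 → EuclideanSpace ℝ (Fin 3) → ℝ)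
    (i j : Fin 3) : EuclideanSpace ℝ (Fin 3) → ℝ :=
  fun x => ∑ k, ∑ l, ∑ m, ∑ n, lc i k l * lc j m n * pd3 k (pd3 m (F l n)) x

/-- The Laplacian `Δf = ∂_m ∂_m f` on `ℝ³`. -/
noncomputable def lap3 (f : EuclideanSpace ℝ (Fin 3) → ℝ) :
    EuclideanSpace ℝ (Fin 3) → ℝ :=
  fun x => ∑ m, pd3 m (pd3 m f) x

/-!
After expanding both sides, everything is a linear combination of the fourth-order partial
derivatives `∂_k ∂_m ∂_a ∂_c F_bd` at one point. On the left, the two pairs of Levi-Civita symbols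
contract through `ε_jmn ε_ncd = δ_jc δ_md - δ_jd δ_mc`, leaving four terms; these are the four
terms on the right once the derivatives are reordered (Schwarz's theorem, iterated along
permutations of the list of directions) and the symmetry of `F` is used.
-/

open scoped ContDiff
open Set

local notation "ℝ³" => EuclideanSpace ℝ (Fin 3)

section Calculus

variable {U : Set ℝ³} {f g : ℝ³ → ℝ} {x : ℝ³}

theorem contDiffOn_pd3 (hU : IsOpen U) (hf : ContDiffOn ℝ ∞ f U) (i : Fin 3) :
    ContDiffOn ℝ ∞ (pd3 i f) U :=
  (hf.fderiv_of_isOpen hU (by simp)).clm_apply contDiffOn_const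

theorem differentiableAt_of_contDiffOn (hU : IsOpen U) (hf : ContDiffOn ℝ ∞ f U) (hx : x ∈ U) :
    DifferentiableAt ℝ f x :=
  (hf.differentiableOn (by simp)).differentiableAt (hU.mem_nhds hx)

theorem pd3_congr (hU : IsOpen U) (h : EqOn f g U) (i : Fin 3) :
    EqOn (pd3 i f) (pd3 i g) U := fun x hx => by
  simp only [pd3, (h.eventuallyEq_of_mem (hU.mem_nhds hx)).fderiv_eq]

theorem pd3_comm (hU : IsOpen U) (hf : ContDiffOn ℝ ∞ f U) (a b : Fin 3) :
    EqOn (pd3 a (pd3 b f)) (pd3 b (pd3 a f)) U := fun x hx => by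
  have hfx : ContDiffAt ℝ ∞ f x := hf.contDiffAt (hU.mem_nhds hx)
  have hd : DifferentiableAt ℝ (fderiv ℝ f) x :=
    (hfx.fderiv_right (m := ∞) (by simp)).differentiableAt (by simp)
  have second (v w : ℝ³) :
      fderiv ℝ (fun y => fderiv ℝ f y v) x w = fderiv ℝ (fderiv ℝ f) x w v := by
    rw [fderiv_clm_apply hd (differentiableAt_const v)]
    simp
  have symm : IsSymmSndFDerivAt ℝ f x := hfx.isSymmSndFDerivAt (by simpa using ENat.LEInfty.out)
  change fderiv ℝ (fun y => fderiv ℝ f y _) x _ = fderiv ℝ (fun y => fderiv ℝ f y _) x _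
  rw [second, second, symm.eq]

theorem pd3_fun_sum {ι : Type*} {s : Finset ι} {g : ι → ℝ³ → ℝ}
    (hg : ∀ t ∈ s, DifferentiableAt ℝ (g t) x) (i : Fin 3) :
    pd3 i (fun y => ∑ t ∈ s, g t y) x = ∑ t ∈ s, pd3 i (g t) x := by
  simp [pd3, fderiv_fun_sum hg]

theorem pd3_const_mul (hg : DifferentiableAt ℝ g x) (c : ℝ) (i : Fin 3) :
    pd3 i (fun y => c * g y) x = c * pd3 i g x := by
  simp [pd3, fderiv_const_mul hg c]

theorem pd3_pd3_fun_sum (hU : IsOpen U) {ι : Type*} {s : Finset ι} {g : ι → ℝ³ → ℝ}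
    (hg : ∀ t ∈ s, ContDiffOn ℝ ∞ (g t) U) (hx : x ∈ U) (a b : Fin 3) :
    pd3 a (pd3 b (fun y => ∑ t ∈ s, g t y)) x = ∑ t ∈ s, pd3 a (pd3 b (g t)) x := by
  rw [pd3_congr hU (fun y hy => pd3_fun_sum
    (fun t ht => differentiableAt_of_contDiffOn hU (hg t ht) hy) b) a hx]
  exact pd3_fun_sum
    (fun t ht => differentiableAt_of_contDiffOn hU (contDiffOn_pd3 hU (hg t ht) b) hx) a

theorem pd3_pd3_const_mul (hU : IsOpen U) (hg : ContDiffOn ℝ ∞ g U) (hx : x ∈ U) (c : ℝ)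
    (a b : Fin 3) : pd3 a (pd3 b (fun y => c * g y)) x = c * pd3 a (pd3 b g) x := by
  rw [pd3_congr hU (fun y hy => pd3_const_mul (differentiableAt_of_contDiffOn hU hg hy) c b) a hx]
  exact pd3_const_mul (differentiableAt_of_contDiffOn hU (contDiffOn_pd3 hU hg b) hx) c a

noncomputable def pdIter (l : List (Fin 3)) (f : ℝ³ → ℝ) : ℝ³ → ℝ := l.foldr pd3 f

theorem contDiffOn_pdIter (hU : IsOpen U) (hf : ContDiffOn ℝ ∞ f U) (l : List (Fin 3)) :
    ContDiffOn ℝ ∞ (pdIter l f) U := by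
  induction l with
  | nil => exact hf
  | cons a l ih => exact contDiffOn_pd3 hU ih a

theorem pdIter_eqOn_of_perm (hU : IsOpen U) (hf : ContDiffOn ℝ ∞ f U) {l₁ l₂ : List (Fin 3)}
    (h : l₁.Perm l₂) : EqOn (pdIter l₁ f) (pdIter l₂ f) U := by
  induction h with
  | nil => exact eqOn_refl _ _
  | cons a _ ih => exact pd3_congr hU ih a
  | swap a b l => exact pd3_comm hU (contDiffOn_pdIter hU hf l) b a
  | trans _ _ ih₁ ih₂ => exact ih₁.trans ih₂

end Calculus

theorem sum_mul_sum_comm {α β : Type*} [Fintype α] [Fintype β] (r : α → ℝ) (p : β → ℝ)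
    (E : α → β → ℝ) : ∑ u, r u * ∑ v, p v * E u v = ∑ v, p v * ∑ u, r u * E u v := by
  simp only [Finset.mul_sum, mul_left_comm (r _)]
  exact Finset.sum_comm

theorem sum_sum_mul_sum_sum_comm {α β : Type*} [Fintype α] [Fintype β] (r : α → α → ℝ)
    (p : β → β → ℝ) (E : α → α → β → β → ℝ) :
    ∑ m, ∑ n, r m n * ∑ a, ∑ b, p a b * E m n a b
      = ∑ a, ∑ b, p a b * ∑ m, ∑ n, r m n * E m n a b := by
  simpa only [Fintype.sum_prod_type] using sum_mul_sum_comm (fun u : α × α => r u.1 u.2)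
    (fun v : β × β => p v.1 v.2) (fun u v => E u.1 u.2 v.1 v.2)

-- `ε_jmn ε_ncd = δ_jc δ_md - δ_jd δ_mc`, contracted against `X`.
theorem lc_contract (X : Fin 3 → Fin 3 → Fin 3 → ℝ) (j : Fin 3) :
    ∑ m, ∑ n, lc j m n * ∑ c, ∑ d, lc n c d * X m c d = ∑ m, (X m j m - X m m j) := by
  fin_cases j <;> (simp [Fin.sum_univ_three, lc]; ring)

theorem inc_inc_contract (E : List (Fin 3) → Fin 3 → Fin 3 → ℝ) (i j : Fin 3) :
    ∑ k, ∑ l, ∑ m, ∑ n, lc i k l * lc j m n *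
        ∑ a, ∑ b, ∑ c, ∑ d, lc l a b * lc n c d * E [k, m, a, c] b d
      = ∑ k, ∑ m, (E [k, m, i, j] k m - E [k, m, i, m] k j
          - (E [k, m, k, j] i m - E [k, m, k, m] i j)) := by
  simp only [mul_assoc, ← Finset.mul_sum]
  simp only [sum_sum_mul_sum_sum_comm (lc j), lc_contract, Finset.sum_sub_distrib]

theorem inc_inc_contract_of_symm (E : List (Fin 3) → Fin 3 → Fin 3 → ℝ)
    (hperm : ∀ l₁ l₂ b d, l₁.Perm l₂ → E l₁ b d = E l₂ b d) (hsymm : ∀ l b d, E l b d = E l d b)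
    (i j : Fin 3) :
    ∑ k, ∑ l, ∑ m, ∑ n, lc i k l * lc j m n *
        ∑ a, ∑ b, ∑ c, ∑ d, lc l a b * lc n c d * E [k, m, a, c] b d
      = ∑ m, ∑ p, E [m, m, p, p] i j + ∑ k, ∑ l, E [i, j, k, l] k l
          - ∑ m, ∑ k, E [m, m, j, k] i k - ∑ m, ∑ k, E [m, m, i, k] j k := by
  have h₁ (k m : Fin 3) : E [k, m, i, j] k m = E [i, j, k, m] k m :=
    hperm _ _ _ _ (List.perm_append_comm (l₁ := [k, m]) (l₂ := [i, j]))
  have h₂ (k m : Fin 3) : E [k, m, i, m] k j = E [m, m, i, k] j k := by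
    rw [hsymm]
    exact hperm _ _ _ _ ((List.perm_append_comm (l₁ := [k]) (l₂ := [m, i, m])).trans
      ((List.Perm.swap m i [k]).cons m))
  have h₃ (k m : Fin 3) : E [k, m, k, j] i m = E [k, k, j, m] i m :=
    hperm _ _ _ _ ((List.perm_append_comm (l₁ := [m]) (l₂ := [k, j])).cons k)
  have h₄ (k m : Fin 3) : E [k, m, k, m] i j = E [k, k, m, m] i j :=
    hperm _ _ _ _ ((List.Perm.swap k m [m]).cons k)
  rw [inc_inc_contract, Finset.sum_comm (f := fun m k => E [m, m, i, k] j k)]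
  simp only [h₁, h₂, h₃, h₄, Finset.sum_sub_distrib]
  ring

theorem inc_inc_apply {U : Set ℝ³} (hU : IsOpen U) {F : Fin 3 → Fin 3 → ℝ³ → ℝ}
    (hF : ∀ b d, ContDiffOn ℝ ∞ (F b d) U) {x : ℝ³} (hx : x ∈ U) (i j : Fin 3) :
    inc (inc F) i j x = ∑ k, ∑ l, ∑ m, ∑ n, lc i k l * lc j m n *
      ∑ a, ∑ b, ∑ c, ∑ d, lc l a b * lc n c d * pdIter [k, m, a, c] (F b d) x := by
  have hF₂ : ∀ a c b d, ContDiffOn ℝ ∞ (pd3 a (pd3 c (F b d))) U :=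
    fun a c b d => contDiffOn_pd3 hU (contDiffOn_pd3 hU (hF b d) c) a
  unfold inc
  simp (disch := first | exact hx | (intros; fun_prop)) only
    [pd3_pd3_fun_sum hU, pd3_pd3_const_mul hU]
  rfl

/-- **Identity (2.5) of the paper:** for a smooth symmetric tensor field `F`,
`inc(inc(F))_ij = ΔΔF_ij + ∂_i∂_j∂_k∂_l F_kl − Δ(∂_j∂_k F_ik) − Δ(∂_i∂_k F_jk)`. -/
theorem inc_inc_eq (U : Set (EuclideanSpace ℝ (Fin 3))) (hU : IsOpen U)
    (F : Fin 3 → Fin 3 → EuclideanSpace ℝ (Fin 3) → ℝ)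
    (hF : ∀ i j, ContDiffOn ℝ (⊤ : ℕ∞) (F i j) U)
    (hsym : ∀ i j, F i j = F j i) :
    ∀ i j, ∀ x ∈ U,
      inc (inc F) i j x
        = lap3 (lap3 (F i j)) x
          + pd3 i (pd3 j (fun y => ∑ k, ∑ l, pd3 k (pd3 l (F k l)) y)) x
          - lap3 (fun y => ∑ k, pd3 j (pd3 k (F i k)) y) x
          - lap3 (fun y => ∑ k, pd3 i (pd3 k (F j k)) y) x := by
  intro i j x hx
  have hF₂ : ∀ a c b d, ContDiffOn ℝ ∞ (pd3 a (pd3 c (F b d))) U :=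
    fun a c b d => contDiffOn_pd3 hU (contDiffOn_pd3 hU (hF b d) c) a
  rw [inc_inc_apply hU hF hx, inc_inc_contract_of_symm (fun l b d => pdIter l (F b d) x)
    (fun l₁ l₂ b d h => pdIter_eqOn_of_perm hU (hF b d) h hx)
    (fun l b d => by simp only [hsym b d])]
  unfold lap3
  simp (disch := first | exact hx | (intros; fun_prop)) only [pd3_pd3_fun_sum hU]
  rfl
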